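/- Let X be an S-valued random element whose Fréchet mean μ exists (i.e., μ is a minimizer of M(p) = E[ρ(X,p)²] over S) and suppose P(ρ(μ, X) = π) = 0. Then the tangent vector V = log_μ X satisfies E[V] = 0, where the expectation is the Bochner integral in H. -/

import Mathlib

open MeasureTheory ProbabilityTheory Filter
open scoped InnerProductSpace Topology BigOperators

noncomputable section

variable {H : Type*} [NormedAddCommGroup H] [InnerProductSpace ℝ H]

/-- Geodesic distance `ρ(f,g) = arccos ⟨f,g⟩` on the unit sphere of `H`. -/
def rho (f g : H) : ℝ := Real.arccos ⟪f, g⟫_ℝ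

/-- Riemannian exponential map `exp_p v = cos‖v‖ • p + (sin‖v‖/‖v‖) • v`
(with the convention `exp_p 0 = p`, since `sin 0 / 0 = 0` in Lean). -/
def expS (p v : H) : H := Real.cos ‖v‖ • p + (Real.sin ‖v‖ / ‖v‖) • v

/-- Logarithm map `log_p x = arccos⟨p,x⟩ • u/‖u‖` with `u = x − ⟨p,x⟩ • p`
(junk value `0` when `u = 0`, so `log_p p = 0`). -/
def logS (p x : H) : H :=
  (Real.arccos ⟪p, x⟫_ℝ / ‖x - ⟪p, x⟫_ℝ • p‖) • (x - ⟪p, x⟫_ℝ • p)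

/-- Tangent space `T_p = {v ∈ H : ⟨v,p⟩ = 0}`, a closed subspace of `H`. -/
def Tp (p : H) : Submodule ℝ H := (ℝ ∙ p)ᗮ

instance (p : H) [CompleteSpace H] : CompleteSpace (Tp p) :=
  (Submodule.isClosed_orthogonal _).completeSpace_coe

lemma logS_mem_Tp (p x : H) (hp : ‖p‖ = 1) : logS p x ∈ Tp p := by
  have h0 : ⟪p, x - ⟪p, x⟫_ℝ • p⟫_ℝ = 0 := by
    rw [inner_sub_right, real_inner_smul_right, real_inner_self_eq_norm_sq, hp]
    ring
  rw [Tp, Submodule.mem_orthogonal_singleton_iff_inner_right, logS,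
    real_inner_smul_right, h0, mul_zero]

/-- The logarithm map as a tangent-space-valued map. -/
def logT (p x : H) (hp : ‖p‖ = 1) : Tp p := ⟨logS p x, logS_mem_Tp p x hp⟩

/-- `g_x(v) = ρ(x, exp_p v)²` defined on the tangent space `T_p`. -/
def gfun (p x : H) : Tp p → ℝ := fun v => rho x (expS p (v : H)) ^ 2

/-! Fix a unit vector `v ⊥ μ` and the geodesic `γ t = cos t • μ + sin t • v`. By the spherical
law of cosines, `cos ρ(x, γ t) = cos r cos t + sin r sin t z` with `r = ρ(x, μ)` and
`r z = ⟪v, log_μ x⟫`, and since `arccos²` is convex on `[-1, 1]` the spherical side is at most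
the Euclidean one: `ρ(x, γ t)² ≤ ρ(x, μ)² - 2 t ⟪v, log_μ x⟫ + t²` for `0 ≤ t ≤ π`. Integrating
against the minimality of `μ` gives `2 t ⟪v, E V⟫ ≤ t²`, hence `⟪v, E V⟫ ≤ 0` for every such `v`.
As `E V ⊥ μ`, taking `v = E V / ‖E V‖` forces `E V = 0`. -/

open Real Set

lemma monotoneOn_div_sin : MonotoneOn (fun w => w / sin w) (Ioo 0 π) := by
  -- `sin` is concave on `[0, π]` and vanishes at `0`, so its secant slopes from `0` decrease.
  intro x hx y hy hxy
  rcases hxy.eq_or_lt with rfl | hlt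
  · rfl
  have hsx : 0 < sin x := sin_pos_of_pos_of_lt_pi hx.1 hx.2
  have hsy : 0 < sin y := sin_pos_of_pos_of_lt_pi hy.1 hy.2
  have h := strictConcaveOn_sin_Icc.secant_strict_mono (a := 0) (by simp [pi_pos.le])
    (Ioo_subset_Icc_self hx) (Ioo_subset_Icc_self hy) hx.1.ne' hy.1.ne' hlt
  simp only [sin_zero, sub_zero] at h
  rw [div_le_div_iff₀ hsx hsy]
  rw [div_lt_div_iff₀ hy.1 hx.1] at h
  linarith

lemma convexOn_arccos_sq : ConvexOn ℝ (Icc (-1) 1) (fun x => arccos x ^ 2) := by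
  have hderiv : ∀ x ∈ Ioo (-1 : ℝ) 1,
      HasDerivAt (fun x => arccos x ^ 2) (-2 * (arccos x / sin (arccos x))) x := by
    intro x hx
    refine ((hasDerivAt_arccos hx.1.ne' hx.2.ne).pow 2).congr_deriv ?_
    rw [sin_arccos]
    ring
  rw [← interior_Icc] at hderiv
  refine MonotoneOn.convexOn_of_deriv (convex_Icc _ _) (continuous_arccos.pow 2).continuousOn
    (fun x hx => (hderiv x hx).differentiableAt.differentiableWithinAt) ?_
  intro x hx y hy hxy
  rw [(hderiv x hx).deriv, (hderiv y hy).deriv]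
  rw [interior_Icc] at hx hy
  have hmem : ∀ x ∈ Ioo (-1 : ℝ) 1, arccos x ∈ Ioo 0 π := fun x hx =>
    ⟨arccos_pos.2 hx.2, arccos_lt_pi.2 hx.1⟩
  have := monotoneOn_div_sin (hmem y hy) (hmem x hx) (arccos_le_arccos hxy)
  simp only at this
  linarith

lemma arccos_cos_le {y : ℝ} (hy : 0 ≤ y) : arccos (cos y) ≤ y := by
  rcases le_total y π with h | h
  · exact (arccos_cos hy h).le
  · exact (arccos_le_pi _).trans h

lemma arccos_cos_mul_cos_add_sin_mul_sin_mul_sq_le {r t z : ℝ} (hr : r ∈ Icc 0 π)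
    (ht : t ∈ Icc 0 π) (hz : z ∈ Icc (-1) 1) :
    arccos (cos r * cos t + sin r * sin t * z) ^ 2 ≤ r ^ 2 + t ^ 2 - 2 * r * t * z := by
  have hsum : arccos (cos (r + t)) ^ 2 ≤ (r + t) ^ 2 :=
    pow_le_pow_left₀ (arccos_nonneg _) (arccos_cos_le (by linarith [hr.1, ht.1])) 2
  have hdiff : arccos (cos (r - t)) ^ 2 = (r - t) ^ 2 := by
    rw [← cos_abs, arccos_cos (abs_nonneg _) (abs_le.2 ⟨by linarith [hr.1, ht.2],
      by linarith [hr.2, ht.1]⟩), sq_abs]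
  have hconv := convexOn_arccos_sq.2 (cos_mem_Icc (r + t)) (cos_mem_Icc (r - t))
    (show 0 ≤ (1 - z) / 2 by linarith [hz.2]) (show 0 ≤ (1 + z) / 2 by linarith [hz.1])
    (by ring)
  calc arccos (cos r * cos t + sin r * sin t * z) ^ 2
      = arccos ((1 - z) / 2 * cos (r + t) + (1 + z) / 2 * cos (r - t)) ^ 2 := by
        rw [cos_add, cos_sub]; ring_nf
    _ ≤ (1 - z) / 2 * arccos (cos (r + t)) ^ 2 + (1 + z) / 2 * arccos (cos (r - t)) ^ 2 :=
        hconv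
    _ ≤ (1 - z) / 2 * (r + t) ^ 2 + (1 + z) / 2 * (r - t) ^ 2 := by
      rw [hdiff]; gcongr; linarith [hz.2]
    _ = _ := by ring

lemma norm_cos_smul_add_sin_smul {p v : H} (hp : ‖p‖ = 1) (hv : ‖v‖ = 1) (hpv : ⟪p, v⟫_ℝ = 0)
    (t : ℝ) : ‖cos t • p + sin t • v‖ = 1 := by
  have h : ‖cos t • p + sin t • v‖ ^ 2 = 1 := by
    rw [norm_add_sq_real, norm_smul, norm_smul, real_inner_smul_left, real_inner_smul_right, hpv,
      hp, hv, Real.norm_eq_abs, Real.norm_eq_abs]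
    nlinarith [sin_sq_add_cos_sq t, sq_abs (sin t), sq_abs (cos t)]
  exact (pow_eq_one_iff_of_nonneg (norm_nonneg _) two_ne_zero).1 h

lemma rho_sq_cos_smul_add_sin_smul_le {p v x : H} (hp : ‖p‖ = 1) (hv : ‖v‖ = 1)
    (hpv : ⟪p, v⟫_ℝ = 0) (hx : ‖x‖ = 1) {t : ℝ} (ht : t ∈ Icc 0 π) :
    rho x (cos t • p + sin t • v) ^ 2 ≤ rho x p ^ 2 - 2 * t * ⟪v, logS p x⟫_ℝ + t ^ 2 := by
  set c := ⟪p, x⟫_ℝ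
  set u := x - c • p
  set r := arccos c
  -- `z = 0` when `u = 0`, matching the junk value `logS p x = 0` at `x = ±p`.
  set z := ⟪u, v⟫_ℝ / ‖u‖
  have hc : c ∈ Icc (-1) 1 := by
    have := abs_real_inner_le_norm p x
    rw [hp, hx, one_mul] at this
    exact abs_le.1 this
  have hu : ‖u‖ = sin r := by
    rw [sin_arccos, ← Real.sqrt_sq (norm_nonneg u)]
    congr 1
    rw [norm_sub_sq_real, norm_smul, real_inner_smul_right, real_inner_comm p x, hp, hx,
      Real.norm_eq_abs, mul_one, sq_abs]
    ring
  have hz : z ∈ Icc (-1) 1 := by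
    have := abs_real_inner_div_norm_mul_norm_le_one u v
    rw [hv, mul_one] at this
    exact abs_le.1 this
  have huv : ⟪u, v⟫_ℝ = ‖u‖ * z := by
    rcases eq_or_ne ‖u‖ 0 with h | h
    · simp [norm_eq_zero.1 h]
    · exact (mul_div_cancel₀ _ h).symm
  have hinner : ⟪x, cos t • p + sin t • v⟫_ℝ = cos r * cos t + sin r * sin t * z := by
    have hxv : ⟪x, v⟫_ℝ = ⟪u, v⟫_ℝ := by
      rw [inner_sub_left, real_inner_smul_left, hpv, mul_zero, sub_zero]
    rw [inner_add_right, real_inner_smul_right, real_inner_smul_right, hxv, huv, hu,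
      cos_arccos hc.1 hc.2, real_inner_comm]
    ring
  have hlog : ⟪v, logS p x⟫_ℝ = r * z := by
    rw [logS, real_inner_smul_right]
    change r / ‖u‖ * ⟪v, u⟫_ℝ = r * (⟪u, v⟫_ℝ / ‖u‖)
    rw [real_inner_comm u v]
    ring
  have hrho : rho x p = r := by rw [rho, real_inner_comm]
  rw [rho, hinner, hlog, hrho]
  have hr : r ∈ Icc 0 π := ⟨arccos_nonneg c, arccos_le_pi c⟩
  linarith [arccos_cos_mul_cos_add_sin_mul_sin_mul_sq_le hr ht hz]

lemma norm_logS_le (p x : H) : ‖logS p x‖ ≤ π := by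
  rw [logS, norm_smul, Real.norm_eq_abs, abs_div, abs_of_nonneg (arccos_nonneg _), abs_norm]
  rcases eq_or_ne ‖x - ⟪p, x⟫_ℝ • p‖ 0 with h | h
  · simp [h, pi_pos.le]
  · rw [div_mul_cancel₀ _ h]
    exact arccos_le_pi _

lemma measurable_logS [MeasurableSpace H] [BorelSpace H] [SecondCountableTopology H] (p : H) :
    Measurable (logS p) := by
  unfold logS
  fun_prop

section FrechetMean

variable {Ω : Type*} [MeasurableSpace Ω] {P : Measure Ω} [MeasurableSpace H] {X : Ω → H}

lemma integrable_rho_sq [IsFiniteMeasure P] [OpensMeasurableSpace H] (hX : Measurable X)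
    (p : H) : Integrable (fun ω => rho (X ω) p ^ 2) P := by
  refine Integrable.mono' (integrable_const (π ^ 2)) ?_ (Eventually.of_forall fun ω => ?_)
  · exact (((continuous_arccos.comp (continuous_id.inner continuous_const)).pow 2).measurable.comp
      hX).aestronglyMeasurable
  · rw [Real.norm_eq_abs, abs_pow, sq_abs]
    exact pow_le_pow_left₀ (arccos_nonneg _) (arccos_le_pi _) 2

lemma integrable_logS [IsFiniteMeasure P] [BorelSpace H] [SecondCountableTopology H]
    (hX : Measurable X) (p : H) : Integrable (fun ω => logS p (X ω)) P :=
  Integrable.mono' (integrable_const π) ((measurable_logS p).comp hX).aestronglyMeasurable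
    (Eventually.of_forall fun ω => norm_logS_le p (X ω))

lemma integral_inner_logS_nonpos [IsProbabilityMeasure P] [BorelSpace H]
    [SecondCountableTopology H] (hX : Measurable X) (hXS : ∀ ω, ‖X ω‖ = 1) {μ : H}
    (hμS : ‖μ‖ = 1)
    (hμmin : ∀ p : H, ‖p‖ = 1 → (∫ ω, rho (X ω) μ ^ 2 ∂P) ≤ ∫ ω, rho (X ω) p ^ 2 ∂P)
    {v : H} (hv : ‖v‖ = 1) (hμv : ⟪μ, v⟫_ℝ = 0) :
    ∫ ω, ⟪v, logS μ (X ω)⟫_ℝ ∂P ≤ 0 := by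
  set E := ∫ ω, ⟪v, logS μ (X ω)⟫_ℝ ∂P
  have hE : Integrable (fun ω => ⟪v, logS μ (X ω)⟫_ℝ) P := (integrable_logS hX μ).const_inner v
  have hstep : ∀ t ∈ Icc 0 π, 2 * t * E ≤ t ^ 2 := by
    intro t ht
    have hsub : Integrable (fun ω => rho (X ω) μ ^ 2 - 2 * t * ⟪v, logS μ (X ω)⟫_ℝ) P :=
      (integrable_rho_sq hX μ).sub (hE.const_mul _)
    have hle : (∫ ω, rho (X ω) (cos t • μ + sin t • v) ^ 2 ∂P) ≤
        ∫ ω, (rho (X ω) μ ^ 2 - 2 * t * ⟪v, logS μ (X ω)⟫_ℝ + t ^ 2) ∂P :=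
      integral_mono (integrable_rho_sq hX _) (hsub.add (integrable_const _)) fun ω =>
        rho_sq_cos_smul_add_sin_smul_le hμS hv hμv (hXS ω) ht
    rw [integral_add hsub (integrable_const _), integral_sub (integrable_rho_sq hX μ)
      (hE.const_mul _), integral_const_mul, integral_const, probReal_univ, one_smul] at hle
    linarith [hμmin _ (norm_cos_smul_add_sin_smul hμS hv hμv t)]
  refine le_of_forall_pos_le_add fun ε hε => ?_
  have ht : min π ε ∈ Icc 0 π := ⟨le_min pi_pos.le hε.le, min_le_left _ _⟩
  have := hstep _ ht
  nlinarith [min_le_right π ε, lt_min pi_pos hε]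

end FrechetMean

theorem tangent_vector_mean_zero_general [CompleteSpace H] [TopologicalSpace.SeparableSpace H]
    [MeasurableSpace H] [BorelSpace H]
    {Ω : Type*} [MeasurableSpace Ω] (P : Measure Ω) [IsProbabilityMeasure P]
    (X : Ω → H) (hX : Measurable X) (hXS : ∀ ω, ‖X ω‖ = 1)
    -- μ is a Fréchet mean of X
    (μ : H) (hμS : ‖μ‖ = 1)
    (hμmin : ∀ p : H, ‖p‖ = 1 →
      (∫ ω, rho (X ω) μ ^ 2 ∂P) ≤ ∫ ω, rho (X ω) p ^ 2 ∂P) :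
    (∫ ω, logS μ (X ω) ∂P) = 0 := by
  have := UniformSpace.secondCountable_of_separable H
  set m := ∫ ω, logS μ (X ω) ∂P
  have hL := integrable_logS (P := P) hX μ
  have hμL : ∀ ω, ⟪μ, logS μ (X ω)⟫_ℝ = 0 := fun ω =>
    Submodule.mem_orthogonal_singleton_iff_inner_right.1 (logS_mem_Tp μ (X ω) hμS)
  have hμm : ⟪μ, m⟫_ℝ = 0 := by
    rw [← integral_inner hL]
    simp [hμL]
  by_contra hm
  have hpos : 0 < ⟪‖m‖⁻¹ • m, m⟫_ℝ := by
    rw [real_inner_smul_left, real_inner_self_eq_norm_sq]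
    have := norm_pos_iff.2 hm
    field_simp
    positivity
  have hnonpos := integral_inner_logS_nonpos (v := ‖m‖⁻¹ • m) hX hXS hμS hμmin
    (norm_smul_inv_norm hm) (by rw [real_inner_smul_right, hμm, mul_zero])
  rw [integral_inner hL] at hnonpos
  linarith

/-- the tangent vector `V = log_μ X` at the Fréchet mean has
Bochner mean zero in `H`. -/
theorem tangent_vector_mean_zero [CompleteSpace H] [TopologicalSpace.SeparableSpace H]
    [MeasurableSpace H] [BorelSpace H]
    {Ω : Type*} [MeasurableSpace Ω] (P : Measure Ω) [IsProbabilityMeasure P]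
    (X : Ω → H) (hX : Measurable X) (hXS : ∀ ω, ‖X ω‖ = 1)
    -- μ is a Fréchet mean of X
    (μ : H) (hμS : ‖μ‖ = 1)
    (hμmin : ∀ p : H, ‖p‖ = 1 →
      (∫ ω, rho (X ω) μ ^ 2 ∂P) ≤ ∫ ω, rho (X ω) p ^ 2 ∂P)
    (hπ : P {ω | rho μ (X ω) = Real.pi} = 0) :
    (∫ ω, logS μ (X ω) ∂P) = 0 :=
  tangent_vector_mean_zero_general P X hX hXS μ hμS hμmin
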